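/- arXiv:math/0605331 — 2 statements merged into one kernel-verified Lean document; each statement's English description precedes it below -/
import Mathlib

section
/- An operator S ∈ B(ℓ²(T)) is a constant (i.e., both S and S* are causal) if and only if Sχ_t lies in the closed linear span of {χ_s : s ≍ t} for every node t ∈ T. -/
open scoped InnerProductSpace ENNReal
open ContinuousLinearMap (adjoint)

noncomputable section

namespace Multiscale

/-- A homogeneous tree of order `q` with a distinguished boundary point `∞`,
encoded by the `q` primitive shift maps (the right action `t ↦ t·αⱼ`, giving the
`q` successors of a node) together with the parent map (the first step of the
unique path from a node towards the boundary point `∞`).  The axioms say: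
the shifts are jointly injective, `t·αⱼ` has parent `t`, every node is a
successor of its parent, the parent map has no cycles (acyclicity of the tree)
and the paths from any two nodes to `∞` eventually merge (connectedness and the
choice of one common boundary point). -/
structure HomTree (q : ℕ) (T : Type) where
  shift : Fin q → T → T
  parent : T → T
  shift_inj : ∀ i j s t, shift i s = shift j t → i = j ∧ s = t
  parent_shift : ∀ j t, parent (shift j t) = t
  shift_parent : ∀ t, ∃ j, shift j (parent t) = t
  acyclic : ∀ t n, parent^[n] t = t → n = 0
  connected : ∀ s t, ∃ m n, parent^[m] s = parent^[n] t

variable {q : ℕ} {T : Type} [DecidableEq T]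

/-- The partial order `s ⪯ t` induced by the boundary point:
`dist(s, s ∧ t) ≤ dist(t, s ∧ t)`. -/
def HomTree.ple (S : HomTree q T) (s t : T) : Prop :=
  ∃ m n, m ≤ n ∧ S.parent^[m] s = S.parent^[n] t

/-- The horocycle equivalence `s ≍ t` : `dist(s, s ∧ t) = dist(t, s ∧ t)`. -/
def HomTree.horo (S : HomTree q T) (s t : T) : Prop :=
  ∃ n, S.parent^[n] s = S.parent^[n] t

/-- The right action `t ↦ t·w` of a word `w ∈ F_q` on the tree. -/
def HomTree.act (S : HomTree q T) : List (Fin q) → T → T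
  | [], t => t
  | i :: w, t => S.act w (S.shift i t)

/-- `ℓ²(T)`. -/
abbrev L2 (T : Type) : Type := lp (fun _ : T => ℂ) 2

/-- The operator on `ℓ²` associated with a word `w ∈ F_q`, built from the
operators of the primitive shifts: `(w f)(t) = f(t·w)`. -/
def wordOp {q : ℕ} {H : Type} [NormedAddCommGroup H] [NormedSpace ℂ H]
    (A : Fin q → (H →L[ℂ] H)) : List (Fin q) → (H →L[ℂ] H)
  | [] => 1
  | i :: w => A i ∘L wordOp A w

/-- A bounded operator on `ℓ²(T)` is causal if whenever `f` vanishes on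
`{t : t ⪯ s}` so does `Xf`. -/
def Causal (S : HomTree q T) (X : L2 T →L[ℂ] L2 T) : Prop :=
  ∀ s : T, ∀ f : L2 T, (∀ t, S.ple t s → f t = 0) → ∀ t, S.ple t s → X f t = 0

/-- A constant: both `X` and `X*` are causal. -/
def IsConst (S : HomTree q T) (X : L2 T →L[ℂ] L2 T) : Prop :=
  Causal S X ∧ Causal S (adjoint X)

/-- Diagonal with respect to the standard basis `χ_t`. -/
def IsDiagonal (X : L2 T →L[ℂ] L2 T) : Prop :=
  ∀ t : T, ∃ a : ℂ, X (lp.single 2 t 1) = a • lp.single 2 t 1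

/-- A pair of words of `F_q` is irreducible if it is not of the form
`(αᵢ v₁, αᵢ v₂)`. -/
def Irred {q : ℕ} (w₁ w₂ : List (Fin q)) : Prop :=
  ¬ ∃ (i : Fin q) (v₁ v₂ : List (Fin q)), w₁ = i :: v₁ ∧ w₂ = i :: v₂

/-- Membership in the Hilbert--Schmidt class: `trace (X*X) = Σ_t ‖X χ_t‖² < ∞`. -/
def HSSummable (X : L2 T →L[ℂ] L2 T) : Prop :=
  Summable fun t : T => ‖X (lp.single 2 t 1)‖ ^ 2

/-- The Hilbert--Schmidt norm `‖X‖₂ = (trace (X*X))^{1/2}`. -/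
def hsNorm (X : L2 T →L[ℂ] L2 T) : ℝ :=
  Real.sqrt (∑' t : T, ‖X (lp.single 2 t 1)‖ ^ 2)

/-- The Hilbert--Schmidt inner product `⟨X, Y⟩₂ = trace (Y* X)`
(linear in `X`, conjugate-linear in `Y`). -/
def hsInner (X Y : L2 T →L[ℂ] L2 T) : ℂ :=
  ∑' t : T, ⟪Y (lp.single 2 t 1), X (lp.single 2 t 1)⟫_ℂ

/-! Read everything through the matrix entries `(X χ_u)(t)`. Causality of `X` amounts to
`(X χ_u)(t) = 0` whenever `u ⋠ t`, by expanding `X f (t) = ∑_u f(u) (X χ_u)(t)` and using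
transitivity of `⪯`; causality of `X*` is the same condition for the transposed matrix.
Since `s ≍ t` holds exactly when `s ⪯ t` and `t ⪯ s` (the parent map has no cycles),
both together say that the matrix vanishes off `≍`, which is the claimed description of
the columns `X χ_u`. -/

section tree

variable {q : ℕ} {T : Type} (S : HomTree q T)

theorem HomTree.ple_refl (t : T) : S.ple t t :=
  ⟨0, 0, le_rfl, rfl⟩

theorem HomTree.ple_trans {s t u : T}
    (hst : S.ple s t) (htu : S.ple t u) : S.ple s u := by
  obtain ⟨a, b, hab, h₁⟩ := hst
  obtain ⟨c, d, hcd, h₂⟩ := htu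
  refine ⟨c + a, d + b, by omega, ?_⟩
  rw [Function.iterate_add_apply, h₁, ← Function.iterate_add_apply, add_comm c b,
    Function.iterate_add_apply, h₂, ← Function.iterate_add_apply, add_comm]

theorem HomTree.horo_iff_ple_and_ple {s t : T} :
    S.horo s t ↔ S.ple s t ∧ S.ple t s := by
  refine ⟨fun ⟨n, h⟩ => ⟨⟨n, n, le_rfl, h⟩, ⟨n, n, le_rfl, h.symm⟩⟩, ?_⟩
  rintro ⟨⟨a, b, hab, h₁⟩, ⟨c, d, hcd, h₂⟩⟩
  -- Going up `a + c` or `b + d` steps from `s` reaches the same node, so acyclicity forces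
  -- `a + c = b + d`, whence `a = b`.
  have hloop : S.parent^[a + c] s = S.parent^[b + d] s := by
    rw [add_comm a c, Function.iterate_add_apply, h₁, ← Function.iterate_add_apply, add_comm c b,
      Function.iterate_add_apply, h₂, ← Function.iterate_add_apply]
  have hcycle : S.parent^[b + d - (a + c)] (S.parent^[a + c] s) = S.parent^[a + c] s := by
    rw [← Function.iterate_add_apply, Nat.sub_add_cancel (by omega), hloop]
  have hab' : a = b := by have := S.acyclic _ _ hcycle; omega
  exact ⟨a, hab' ▸ h₁⟩

end tree

section l2

variable {T : Type} [DecidableEq T]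

theorem single_eq_smul_single_one (t : T) (a : ℂ) :
    (lp.single 2 t a : L2 T) = a • lp.single 2 t 1 := by
  rw [← lp.single_smul, smul_eq_mul, mul_one]

theorem inner_single_one_left (t : T) (f : L2 T) : ⟪lp.single 2 t (1 : ℂ), f⟫_ℂ = f t := by
  simp [lp.inner_single_left]

theorem adjoint_single_apply (X : L2 T →L[ℂ] L2 T) (s t : T) :
    adjoint X (lp.single 2 s 1) t = starRingEnd ℂ (X (lp.single 2 t 1) s) := by
  rw [← inner_single_one_left, ContinuousLinearMap.adjoint_inner_right, ← inner_conj_symm,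
    inner_single_one_left]

theorem hasSum_mul_apply_single (X : L2 T →L[ℂ] L2 T) (f : L2 T) (t : T) :
    HasSum (fun u => f u * X (lp.single 2 u 1) t) (X f t) := by
  have := ((lp.evalCLM ℂ (fun _ : T => ℂ) 2 t).comp X).hasSum
    (lp.hasSum_single ENNReal.ofNat_ne_top f)
  simpa [single_eq_smul_single_one _ (f _), lp.evalCLM] using this

theorem mem_closure_span_single_iff (P : T → Prop) (f : L2 T) :
    f ∈ closure (Submodule.span ℂ {g : L2 T | ∃ s, P s ∧ g = lp.single 2 s 1} : Set (L2 T))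
      ↔ ∀ s, ¬ P s → f s = 0 := by
  constructor
  · intro hf s hs
    let ev := lp.evalCLM ℂ (fun _ : T => ℂ) 2 s
    have hspan : Submodule.span ℂ {g : L2 T | ∃ s, P s ∧ g = lp.single 2 s 1} ≤
        LinearMap.ker (ev : L2 T →ₗ[ℂ] ℂ) := by
      rw [Submodule.span_le]
      rintro _ ⟨u, hu, rfl⟩
      exact lp.single_apply_ne 2 u _ fun h => hs (h ▸ hu)
    exact closure_minimal hspan ev.isClosed_ker hf
  · intro hf
    refine mem_closure_of_tendsto (lp.hasSum_single ENNReal.ofNat_ne_top f)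
      (Filter.Eventually.of_forall fun F => Submodule.sum_mem _ fun u _ => ?_)
    rw [single_eq_smul_single_one]
    by_cases hu : P u
    · exact Submodule.smul_mem _ _ (Submodule.subset_span ⟨u, hu, rfl⟩)
    · rw [hf u hu, zero_smul]
      exact zero_mem _

end l2

theorem causal_iff_apply_single_eq_zero (S : HomTree q T) (X : L2 T →L[ℂ] L2 T) :
    Causal S X ↔ ∀ t u, ¬ S.ple u t → X (lp.single 2 u 1) t = 0 := by
  constructor
  · intro hX t u hut
    refine hX t _ (fun v hv => lp.single_apply_ne 2 u _ ?_) t (S.ple_refl t)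
    rintro rfl
    exact hut hv
  · intro hX s f hf t hts
    refine (hasSum_mul_apply_single X f t).unique (hasSum_zero.congr_fun fun u => ?_)
    by_cases hus : S.ple u s
    · rw [hf u hus, zero_mul]
    · rw [hX t u fun hut => hus (S.ple_trans hut hts), mul_zero]

theorem isConst_iff_apply_single_eq_zero (S : HomTree q T) (X : L2 T →L[ℂ] L2 T) :
    IsConst S X ↔ ∀ t u, ¬ S.horo t u → X (lp.single 2 u 1) t = 0 := by
  simp only [IsConst, causal_iff_apply_single_eq_zero, adjoint_single_apply, map_eq_zero,
    S.horo_iff_ple_and_ple, not_and_or]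
  exact ⟨fun ⟨h₁, h₂⟩ t u h => h.elim (h₂ u t) (h₁ t u),
    fun h => ⟨fun t u hut => h t u (Or.inr hut), fun t u hut => h u t (Or.inl hut)⟩⟩

theorem const_iff_horocycle_span_general {q : ℕ} {T : Type} [DecidableEq T]
    (S : HomTree q T) (X : L2 T →L[ℂ] L2 T) :
    IsConst S X ↔ ∀ t : T, X (lp.single 2 t 1) ∈
      closure (Submodule.span ℂ {g : L2 T | ∃ s, S.horo s t ∧ g = lp.single 2 s 1} :
        Set (L2 T)) := by
  simp only [isConst_iff_apply_single_eq_zero, mem_closure_span_single_iff]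
  exact forall_comm

/-- An operator `X` on `ℓ²(T)` is a constant (both `X` and `X*`
are causal) if and only if `X χ_t` lies in the closed linear span of
`{χ_s : s ≍ t}` for every node `t`. -/
theorem const_iff_horocycle_span {q : ℕ} (hq : 1 ≤ q) {T : Type} [DecidableEq T]
    (S : HomTree q T) (X : L2 T →L[ℂ] L2 T) :
    IsConst S X ↔ ∀ t : T, X (lp.single 2 t 1) ∈
      closure (Submodule.span ℂ {g : L2 T | ∃ s, S.horo s t ∧ g = lp.single 2 s 1} :
        Set (L2 T)) :=
  const_iff_horocycle_span_general S X
end Multiscale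
end
end

section
/- Let c ∈ B(T) (i.e., a q-tuple of constants with spectral radius condition lim ‖(cα)^n‖^{1/n} < 1, where α is the column of primitive shifts). Then I − α*c* is invertible in the algebra of causal bounded operators, with inverse K_∧^c = Σ_{n≥0} (α*c*)^n (norm-absolutely convergent), and for every causal Hilbert–Schmidt F and every Hilbert–Schmidt constant k, ⟨F^∧(c), k⟩_2 = ⟨F, K_∧^c k⟩_2. -/
open scoped InnerProductSpace ENNReal
open ContinuousLinearMap (adjoint)

noncomputable section

/-!
The Neumann series of `α*c* = (cα)*` converges absolutely by Gelfand's formula, and its sum `K`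
is causal because every power of `α*c*` is.

For Cauchy's formula compare the diagonal entries at `χ_t`: with `Gₙ = Σ_{|w|=n} w* F_[w]`,
`⟨(cα)ⁿ Gₙ χ_t, k χ_t⟩ = ⟨Gₙ χ_t, (α*c*)ⁿ k χ_t⟩`. Constants preserve horocycles and each
`αⱼ*` moves one generation away from the boundary point, so `(α*c*)ⁿ k χ_t` lives on the horocycle
`n` generations below `t`. On that horocycle only the words of length `n` contribute to
`F χ_t = Σ_w w* F_[w] χ_t`, so `Gₙ χ_t` may be replaced by `F χ_t`; summing over `n` gives
`⟨F χ_t, K k χ_t⟩`.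
-/

theorem HasSum.eq_sum_vector_of_length_eq {α M : Type*} [Fintype α] [AddCommMonoid M]
    [TopologicalSpace M] [T2Space M] {g : List α → M} {a : M} (hg : HasSum g a) {n : ℕ}
    (h : ∀ w, g w ≠ 0 → w.length = n) : a = ∑ v : List.Vector α n, g v.1 := by
  have hv : HasSum (fun v : List.Vector α n => g v.1) a := by
    refine (Subtype.val_injective.hasSum_iff fun w hw => ?_).2 hg
    by_contra hgw
    exact hw ⟨⟨w, h w hgw⟩, rfl⟩
  exact hv.unique (hasSum_fintype _)

theorem summable_norm_pow_of_spectralRadius_lt_one {A : Type*} [NormedRing A]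
    [NormedAlgebra ℂ A] [CompleteSpace A] {a : A} (h : spectralRadius ℂ a < 1) :
    Summable fun n : ℕ => ‖a ^ n‖ := by
  obtain ⟨r, har, hr1⟩ := ENNReal.lt_iff_exists_nnreal_btwn.mp h
  refine (summable_geometric_of_lt_one r.coe_nonneg (ENNReal.coe_lt_one_iff.mp hr1))
    |>.of_norm_bounded_eventually_nat ?_
  filter_upwards [(spectrum.pow_nnnorm_pow_one_div_tendsto_nhds_spectralRadius a)
    |>.eventually_lt_const har, Filter.eventually_gt_atTop 0] with n hn hn0
  rw [one_div, ENNReal.rpow_inv_lt_iff (by positivity), ENNReal.rpow_natCast] at hn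
  rw [norm_norm]
  exact_mod_cast hn.le

theorem ContinuousLinearMap.adjoint_pow {H : Type*} [NormedAddCommGroup H]
    [InnerProductSpace ℂ H] [CompleteSpace H] (X : H →L[ℂ] H) (n : ℕ) :
    adjoint (X ^ n) = adjoint X ^ n := by
  simp only [← ContinuousLinearMap.star_eq_adjoint, star_pow]

namespace Multiscale.HomTree

variable {q : ℕ} {T : Type} (S : HomTree q T)

theorem iterate_parent_injective (x : T) : Function.Injective (S.parent^[·] x) := by
  suffices ∀ m d, S.parent^[m + d] x = S.parent^[m] x → d = 0 by
    intro m n hmn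
    rcases le_total m n with h | h
    · obtain ⟨d, rfl⟩ := Nat.exists_eq_add_of_le h
      simp [this m d hmn.symm]
    · obtain ⟨d, rfl⟩ := Nat.exists_eq_add_of_le h
      simp [this n d hmn]
  intro m d h
  exact S.acyclic _ d (by rwa [← Function.iterate_add_apply, add_comm])

theorem ple_refl_s14 (t : T) : S.ple t t := ⟨0, 0, le_rfl, rfl⟩

theorem ple_trans_s14 {r s t : T} (hrs : S.ple r s) (hst : S.ple s t) : S.ple r t := by
  obtain ⟨m, n, hmn, h⟩ := hrs
  obtain ⟨m', n', hmn', h'⟩ := hst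
  refine ⟨m' + m, n' + n, by omega, ?_⟩
  rw [Function.iterate_add_apply, h, ← Function.iterate_add_apply, add_comm m' n,
    Function.iterate_add_apply, h', ← Function.iterate_add_apply, add_comm]

theorem ple_shift (j : Fin q) (t : T) : S.ple t (S.shift j t) :=
  ⟨0, 1, zero_le_one, by simp [S.parent_shift]⟩

theorem horo_iterate {s t : T} (h : S.horo s t) (m : ℕ) :
    S.horo (S.parent^[m] s) (S.parent^[m] t) := by
  obtain ⟨n, hn⟩ := h
  refine ⟨n, ?_⟩
  rw [← Function.iterate_add_apply, add_comm, Function.iterate_add_apply, hn,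
    ← Function.iterate_add_apply, add_comm, Function.iterate_add_apply]

theorem horo_trans {r s t : T} (hrs : S.horo r s) (hst : S.horo s t) : S.horo r t := by
  obtain ⟨m, hm⟩ := hrs
  obtain ⟨n, hn⟩ := hst
  refine ⟨n + m, ?_⟩
  rw [Function.iterate_add_apply, hm, ← Function.iterate_add_apply, add_comm,
    Function.iterate_add_apply, hn, ← Function.iterate_add_apply, add_comm]

theorem horo_of_ple_of_ple {s t : T} (hst : S.ple s t) (hts : S.ple t s) : S.horo s t := by
  obtain ⟨m, n, hmn, h⟩ := hst
  obtain ⟨m', n', hmn', h'⟩ := hts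
  have : m' + m = n' + n := S.iterate_parent_injective s <| by
    simp only
    rw [Function.iterate_add_apply, h, ← Function.iterate_add_apply, add_comm m' n,
      Function.iterate_add_apply, h', ← Function.iterate_add_apply, add_comm]
  obtain rfl : m = n := by omega
  exact ⟨m, h⟩

theorem eq_of_horo_iterate {s t : T} {m n : ℕ} (hm : S.horo (S.parent^[m] s) t)
    (hn : S.horo (S.parent^[n] s) t) : m = n := by
  obtain ⟨a, ha⟩ := hm
  obtain ⟨b, hb⟩ := hn
  have := S.iterate_parent_injective s (a₁ := b + a + m) (a₂ := a + b + n) <| by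
    simp only
    rw [add_assoc, Function.iterate_add_apply, Function.iterate_add_apply _ a, ha,
      add_assoc, Function.iterate_add_apply, Function.iterate_add_apply _ b, hb,
      ← Function.iterate_add_apply, ← Function.iterate_add_apply, add_comm]
  omega

end Multiscale.HomTree

namespace Multiscale

variable {q : ℕ} {T : Type}

def SupportedBelow (S : HomTree q T) (n : ℕ) (t : T) (f : L2 T) : Prop :=
  ∀ s, f s ≠ 0 → S.horo (S.parent^[n] s) t

def homogeneousPart (A : Fin q → L2 T →L[ℂ] L2 T) (Fc : List (Fin q) → L2 T →L[ℂ] L2 T)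
    (n : ℕ) : L2 T →L[ℂ] L2 T :=
  ∑ w : List.Vector (Fin q) n, adjoint (wordOp A w.1) ∘L Fc w.1

namespace L2

theorem hasSum_apply {ι : Type*} {f : ι → L2 T} {g : L2 T} (h : HasSum f g) (s : T) :
    HasSum (fun i => f i s) (g s) :=
  h.mapL (lp.evalCLM ℂ (fun _ : T => ℂ) 2 s)

theorem sum_apply {ι : Type*} (I : Finset ι) (f : ι → L2 T) (s : T) :
    (∑ i ∈ I, f i) s = ∑ i ∈ I, f i s := by
  rw [lp.coeFn_sum, Finset.sum_apply]

theorem inner_congr_right {y f g : L2 T} (h : ∀ s, y s ≠ 0 → f s = g s) :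
    ⟪y, f⟫_ℂ = ⟪y, g⟫_ℂ := by
  rw [lp.inner_eq_tsum, lp.inner_eq_tsum]
  refine tsum_congr fun s => ?_
  by_cases hs : y s = 0
  · simp [hs]
  · rw [h s hs]

end L2

variable {S : HomTree q T}

theorem Causal.comp {X Y : L2 T →L[ℂ] L2 T} (hX : Causal S X) (hY : Causal S Y) :
    Causal S (X ∘L Y) :=
  fun s f hf => hX s (Y f) (hY s f hf)

theorem causal_one : Causal S (1 : L2 T →L[ℂ] L2 T) :=
  fun _ _ hf => hf

theorem Causal.pow {X : L2 T →L[ℂ] L2 T} (hX : Causal S X) (n : ℕ) : Causal S (X ^ n) := by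
  induction n with
  | zero => exact causal_one
  | succ n ih => rw [pow_succ]; exact ih.comp hX

theorem causal_sum {ι : Type*} (I : Finset ι) {X : ι → L2 T →L[ℂ] L2 T}
    (hX : ∀ i ∈ I, Causal S (X i)) : Causal S (∑ i ∈ I, X i) := by
  intro s f hf t ht
  rw [_root_.sum_apply, L2.sum_apply]
  exact Finset.sum_eq_zero fun i hi => hX i hi s f hf t ht

theorem causal_of_hasSum {ι : Type*} {X : ι → L2 T →L[ℂ] L2 T} {K : L2 T →L[ℂ] L2 T}
    (hX : ∀ i, Causal S (X i)) (hK : HasSum X K) : Causal S K := by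
  intro s f hf t ht
  have := L2.hasSum_apply (hK.mapL (ContinuousLinearMap.apply ℂ (L2 T) f)) t
  exact this.unique (by simp [hX _ s f hf t ht])

theorem IsConst.adjoint {X : L2 T →L[ℂ] L2 T} (hX : IsConst S X) : IsConst S (adjoint X) :=
  ⟨hX.2, by rw [ContinuousLinearMap.adjoint_adjoint]; exact hX.1⟩

theorem SupportedBelow.sum {ι : Type*} (I : Finset ι) {f : ι → L2 T} {n : ℕ} {t : T}
    (hf : ∀ i ∈ I, SupportedBelow S n t (f i)) : SupportedBelow S n t (∑ i ∈ I, f i) := by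
  intro s hs
  rw [L2.sum_apply] at hs
  obtain ⟨i, hi, hfi⟩ := Finset.exists_ne_zero_of_sum_ne_zero hs
  exact hf i hi s hfi

variable [DecidableEq T]

theorem L2.apply_eq_inner_single (f : L2 T) (s : T) :
    f s = ⟪lp.single 2 s (1 : ℂ), f⟫_ℂ := by
  simp [lp.inner_single_left]

theorem L2.adjoint_apply_single (X : L2 T →L[ℂ] L2 T) (t s : T) :
    adjoint X (lp.single 2 t 1) s = starRingEnd ℂ (X (lp.single 2 s 1) t) := by
  rw [apply_eq_inner_single, ContinuousLinearMap.adjoint_inner_right, lp.inner_single_right]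
  simp

theorem Causal.ple_of_apply_single_ne_zero {X : L2 T →L[ℂ] L2 T} (hX : Causal S X) {t s : T}
    (h : X (lp.single 2 t 1) s ≠ 0) : S.ple t s := by
  by_contra hts
  refine h (hX s _ (fun u hu => lp.single_apply_ne _ _ _ ?_) s (S.ple_refl_s14 s))
  rintro rfl
  exact hts hu

theorem IsConst.horo_of_apply_single_ne_zero {X : L2 T →L[ℂ] L2 T} (hX : IsConst S X) {t s : T}
    (h : X (lp.single 2 t 1) s ≠ 0) : S.horo s t := by
  refine S.horo_of_ple_of_ple (hX.2.ple_of_apply_single_ne_zero ?_)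
    (hX.1.ple_of_apply_single_ne_zero h)
  simpa [L2.adjoint_apply_single] using h

theorem IsConst.exists_horo_of_apply_ne_zero {X : L2 T →L[ℂ] L2 T} (hX : IsConst S X)
    {f : L2 T} {s : T} (h : X f s ≠ 0) : ∃ p, S.horo s p ∧ f p ≠ 0 := by
  have hexp : HasSum (fun p => f p • X (lp.single 2 p 1) s) (X f s) := by
    refine L2.hasSum_apply ((lp.hasSum_single ENNReal.ofNat_ne_top f).mapL X) s |>.congr_fun ?_
    intro p
    rw [show (lp.single 2 p (f p) : L2 T) = f p • lp.single 2 p 1 by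
      rw [← lp.single_smul, smul_eq_mul, mul_one], map_smul]
    rfl
  by_contra! hp
  refine h (hexp.unique ?_)
  convert hasSum_zero with p
  by_cases hXp : X (lp.single 2 p 1) s = 0
  · rw [hXp, smul_zero]
  · rw [hp p (hX.horo_of_apply_single_ne_zero hXp), zero_smul]

theorem exists_shift_of_adjoint_apply_ne_zero {B : L2 T →L[ℂ] L2 T} {j : Fin q}
    (hB : ∀ f t, B f t = f (S.shift j t)) {g : L2 T} {s : T} (h : adjoint B g s ≠ 0) :
    ∃ r, S.shift j r = s ∧ g r ≠ 0 := by
  by_contra! hg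
  refine h ?_
  rw [L2.apply_eq_inner_single, ContinuousLinearMap.adjoint_inner_right, lp.inner_eq_tsum]
  refine (tsum_congr fun r => ?_).trans tsum_zero
  rw [hB]
  by_cases hr : S.shift j r = s
  · simp [hg r hr]
  · rw [lp.single_apply_ne _ _ _ hr]
    simp

theorem causal_adjoint_shift {B : L2 T →L[ℂ] L2 T} {j : Fin q}
    (hB : ∀ f t, B f t = f (S.shift j t)) : Causal S (adjoint B) := by
  intro s f hf t ht
  by_contra h
  obtain ⟨r, rfl, hr⟩ := exists_shift_of_adjoint_apply_ne_zero hB h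
  exact hr (hf r (S.ple_trans_s14 (S.ple_shift j r) ht))

theorem causal_adjoint_comb {A c : Fin q → L2 T →L[ℂ] L2 T}
    (hA : ∀ (j : Fin q) (f : L2 T) (t : T), A j f t = f (S.shift j t))
    (hc : ∀ j, IsConst S (c j)) : Causal S (adjoint (∑ j, c j ∘L A j)) := by
  rw [map_sum]
  refine causal_sum _ fun j _ => ?_
  rw [ContinuousLinearMap.adjoint_comp]
  exact (causal_adjoint_shift (hA j)).comp (hc j).2

theorem supportedBelow_single (t : T) (a : ℂ) : SupportedBelow S 0 t (lp.single 2 t a) := by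
  intro s hs
  obtain rfl : s = t := by
    by_contra hst
    exact hs (lp.single_apply_ne _ _ _ hst)
  exact ⟨0, rfl⟩

theorem SupportedBelow.const {X : L2 T →L[ℂ] L2 T} (hX : IsConst S X) {n : ℕ} {t : T}
    {f : L2 T} (hf : SupportedBelow S n t f) : SupportedBelow S n t (X f) := by
  intro s hs
  obtain ⟨p, hsp, hp⟩ := hX.exists_horo_of_apply_ne_zero hs
  exact S.horo_trans (S.horo_iterate hsp n) (hf p hp)

theorem SupportedBelow.adjoint_shift {B : L2 T →L[ℂ] L2 T} {j : Fin q}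
    (hB : ∀ f t, B f t = f (S.shift j t)) {n : ℕ} {t : T} {f : L2 T}
    (hf : SupportedBelow S n t f) : SupportedBelow S (n + 1) t (adjoint B f) := by
  intro s hs
  obtain ⟨r, rfl, hr⟩ := exists_shift_of_adjoint_apply_ne_zero hB hs
  rw [Function.iterate_succ_apply, S.parent_shift]
  exact hf r hr

theorem SupportedBelow.adjoint_wordOp {A : Fin q → L2 T →L[ℂ] L2 T}
    (hA : ∀ (j : Fin q) (f : L2 T) (t : T), A j f t = f (S.shift j t)) (w : List (Fin q))
    {n : ℕ} {t : T} {f : L2 T} (hf : SupportedBelow S n t f) :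
    SupportedBelow S (n + w.length) t (adjoint (wordOp A w) f) := by
  induction w generalizing n f with
  | nil => simpa [wordOp, ← ContinuousLinearMap.star_eq_adjoint] using hf
  | cons i w ih =>
    rw [wordOp, ContinuousLinearMap.adjoint_comp, ContinuousLinearMap.comp_apply,
      List.length_cons, add_comm w.length, ← add_assoc]
    exact ih (hf.adjoint_shift (hA i))

theorem SupportedBelow.adjoint_comb {A c : Fin q → L2 T →L[ℂ] L2 T}
    (hA : ∀ (j : Fin q) (f : L2 T) (t : T), A j f t = f (S.shift j t))
    (hc : ∀ j, IsConst S (c j)) {n : ℕ} {t : T} {f : L2 T} (hf : SupportedBelow S n t f) :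
    SupportedBelow S (n + 1) t (adjoint (∑ j, c j ∘L A j) f) := by
  rw [map_sum, _root_.sum_apply]
  refine SupportedBelow.sum _ fun j _ => ?_
  rw [ContinuousLinearMap.adjoint_comp, ContinuousLinearMap.comp_apply]
  exact (hf.const (hc j).adjoint).adjoint_shift (hA j)

variable {A c : Fin q → L2 T →L[ℂ] L2 T} {Fc : List (Fin q) → L2 T →L[ℂ] L2 T}
  {F : L2 T →L[ℂ] L2 T}

theorem apply_single_eq_homogeneousPart
    (hA : ∀ (j : Fin q) (f : L2 T) (t : T), A j f t = f (S.shift j t))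
    (hFc : ∀ w, IsConst S (Fc w))
    (hF : ∀ (f : L2 T) (t : T),
      HasSum (fun w : List (Fin q) => adjoint (wordOp A w) (Fc w f) t) (F f t))
    {n : ℕ} {t s : T} (hs : S.horo (S.parent^[n] s) t) :
    F (lp.single 2 t 1) s = homogeneousPart A Fc n (lp.single 2 t 1) s := by
  rw [homogeneousPart, _root_.sum_apply, L2.sum_apply]
  refine (hF _ s).eq_sum_vector_of_length_eq fun w hw => S.eq_of_horo_iterate ?_ hs
  simpa using ((supportedBelow_single t 1).const (hFc w)).adjoint_wordOp hA w s hw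

theorem supportedBelow_adjoint_comb_pow
    (hA : ∀ (j : Fin q) (f : L2 T) (t : T), A j f t = f (S.shift j t))
    (hc : ∀ j, IsConst S (c j)) {k : L2 T →L[ℂ] L2 T} (hk : IsConst S k) (t : T) (n : ℕ) :
    SupportedBelow S n t ((adjoint (∑ j, c j ∘L A j) ^ n) (k (lp.single 2 t 1))) := by
  induction n with
  | zero => exact (supportedBelow_single t 1).const hk
  | succ n ih =>
    rw [pow_succ']
    exact ih.adjoint_comb hA hc

theorem hsInner_eq_hsInner_comp
    (hA : ∀ (j : Fin q) (f : L2 T) (t : T), A j f t = f (S.shift j t))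
    (hc : ∀ j, IsConst S (c j)) {K : L2 T →L[ℂ] L2 T}
    (hK : HasSum (fun n : ℕ => adjoint (∑ j, c j ∘L A j) ^ n) K)
    (hFc : ∀ w, IsConst S (Fc w))
    (hF : ∀ (f : L2 T) (t : T),
      HasSum (fun w : List (Fin q) => adjoint (wordOp A w) (Fc w f) t) (F f t))
    {E : L2 T →L[ℂ] L2 T}
    (hE : HasSum (fun n : ℕ => ((∑ j, c j ∘L A j) ^ n) ∘L homogeneousPart A Fc n) E)
    {k : L2 T →L[ℂ] L2 T} (hk : IsConst S k) :
    hsInner E k = hsInner F (K ∘L k) := by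
  refine tsum_congr fun t => ?_
  set χ : L2 T := lp.single 2 t 1
  have hEt : HasSum
      (fun n : ℕ => ⟪k χ, (((∑ j, c j ∘L A j) ^ n) ∘L homogeneousPart A Fc n) χ⟫_ℂ)
      ⟪k χ, E χ⟫_ℂ :=
    (hE.mapL (ContinuousLinearMap.apply ℂ _ χ)).mapL (innerSL ℂ (k χ))
  have hKt : HasSum (fun n : ℕ => ⟪(adjoint (∑ j, c j ∘L A j) ^ n) (k χ), F χ⟫_ℂ)
      ⟪K (k χ), F χ⟫_ℂ :=
    (hK.mapL (ContinuousLinearMap.apply ℂ _ (k χ))).mapL (innerSLFlip ℂ (F χ))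
  refine hEt.unique (hKt.congr_fun fun n => ?_)
  rw [ContinuousLinearMap.comp_apply, ← ContinuousLinearMap.adjoint_inner_left,
    ContinuousLinearMap.adjoint_pow]
  exact L2.inner_congr_right fun s hs => Eq.symm <|
    apply_single_eq_homogeneousPart hA hFc hF (supportedBelow_adjoint_comb_pow hA hc hk t n s hs)

theorem cauchy_formula_general {q : ℕ} {T : Type} [DecidableEq T]
    (S : HomTree q T) (A : Fin q → (L2 T →L[ℂ] L2 T))
    (hA : ∀ (j : Fin q) (f : L2 T) (t : T), A j f t = f (S.shift j t))
    (c : Fin q → (L2 T →L[ℂ] L2 T)) (hc : ∀ j, IsConst S (c j))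
    (hrad : spectralRadius ℂ (∑ j, c j ∘L A j) < 1) :
    ∃ K : L2 T →L[ℂ] L2 T,
      Summable (fun n : ℕ => ‖(adjoint (∑ j, c j ∘L A j)) ^ n‖) ∧
      HasSum (fun n : ℕ => (adjoint (∑ j, c j ∘L A j)) ^ n) K ∧
      Causal S K ∧
      (1 - adjoint (∑ j, c j ∘L A j)) ∘L K = 1 ∧
      K ∘L (1 - adjoint (∑ j, c j ∘L A j)) = 1 ∧
      (∀ (F : L2 T →L[ℂ] L2 T) (Fc : List (Fin q) → (L2 T →L[ℂ] L2 T))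
          (E : L2 T →L[ℂ] L2 T),
        Causal S F → HSSummable F →
        (∀ w, IsConst S (Fc w)) →
        (∀ (f : L2 T) (t : T),
          Summable fun w : List (Fin q) => ‖adjoint (wordOp A w) (Fc w f) t‖) →
        (∀ (f : L2 T) (t : T),
          HasSum (fun w : List (Fin q) => adjoint (wordOp A w) (Fc w f) t)
            (F f t)) →
        HasSum (fun n : ℕ => ((∑ j, c j ∘L A j) ^ n) ∘L
          (∑ w : List.Vector (Fin q) n,
            adjoint (wordOp A w.1) ∘L Fc w.1)) E →
        ∀ k : L2 T →L[ℂ] L2 T, IsConst S k → HSSummable k →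
          hsInner E k = hsInner F (K ∘L k)) := by
  set M := ∑ j, c j ∘L A j
  have hsum : Summable fun n : ℕ => ‖adjoint M ^ n‖ := by
    simpa only [← ContinuousLinearMap.adjoint_pow, LinearIsometryEquiv.norm_map] using
      summable_norm_pow_of_spectralRadius_lt_one hrad
  have hK := hsum.of_norm.hasSum
  refine ⟨_, hsum, hK, causal_of_hasSum ((causal_adjoint_comb hA hc).pow) hK,
    hsum.of_norm.one_sub_mul_tsum_pow, hsum.of_norm.tsum_pow_mul_one_sub, ?_⟩
  intro F Fc E _ _ hFc _ hF hE k hk _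
  exact hsInner_eq_hsInner_comp hA hc hK hFc hF hE hk

/-- For `c ∈ B(T)` (a `q`-tuple of constants with
`lim ‖(cα)ⁿ‖^{1/n} < 1`), the operator `I − α*c*` is invertible in the algebra
of causal bounded operators, with inverse `K_∧^c = Σ_{n≥0} (α*c*)ⁿ`
(norm-absolutely convergent), and Cauchy's formula
`⟨F^∧(c), k⟩₂ = ⟨F, K_∧^c k⟩₂` holds for every causal Hilbert--Schmidt `F`
and Hilbert--Schmidt constant `k`.  Here `cα = Σⱼ cⱼαⱼ`, so `α*c* = (cα)*`,
and `F^∧(c) = Σ_n (cα)ⁿ (Σ_{|w|=n} w* F_[w])` is the point evaluation of `F`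
built from its power series coefficients `F_[w]`. -/
theorem cauchy_formula {q : ℕ} (hq : 1 ≤ q) {T : Type} [DecidableEq T]
    (S : HomTree q T) (A : Fin q → (L2 T →L[ℂ] L2 T))
    (hA : ∀ (j : Fin q) (f : L2 T) (t : T), A j f t = f (S.shift j t))
    (c : Fin q → (L2 T →L[ℂ] L2 T)) (hc : ∀ j, IsConst S (c j))
    (hrad : spectralRadius ℂ (∑ j, c j ∘L A j) < 1) :
    ∃ K : L2 T →L[ℂ] L2 T,
      Summable (fun n : ℕ => ‖(adjoint (∑ j, c j ∘L A j)) ^ n‖) ∧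
      HasSum (fun n : ℕ => (adjoint (∑ j, c j ∘L A j)) ^ n) K ∧
      Causal S K ∧
      (1 - adjoint (∑ j, c j ∘L A j)) ∘L K = 1 ∧
      K ∘L (1 - adjoint (∑ j, c j ∘L A j)) = 1 ∧
      (∀ (F : L2 T →L[ℂ] L2 T) (Fc : List (Fin q) → (L2 T →L[ℂ] L2 T))
          (E : L2 T →L[ℂ] L2 T),
        Causal S F → HSSummable F →
        (∀ w, IsConst S (Fc w)) →
        (∀ (f : L2 T) (t : T),
          Summable fun w : List (Fin q) => ‖adjoint (wordOp A w) (Fc w f) t‖) →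
        (∀ (f : L2 T) (t : T),
          HasSum (fun w : List (Fin q) => adjoint (wordOp A w) (Fc w f) t)
            (F f t)) →
        HasSum (fun n : ℕ => ((∑ j, c j ∘L A j) ^ n) ∘L
          (∑ w : List.Vector (Fin q) n,
            adjoint (wordOp A w.1) ∘L Fc w.1)) E →
        ∀ k : L2 T →L[ℂ] L2 T, IsConst S k → HSSummable k →
          hsInner E k = hsInner F (K ∘L k)) :=
  cauchy_formula_general S A hA c hc hrad

end Multiscale
end
end
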